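/- arXiv:0803.2052 — 7 statements merged into one kernel-verified Lean document; each statement's English description precedes it below -/
import Mathlib

section
/- Let k be a complete discretely valued field of characteristic 0 with odd residue characteristic, f ∈ O[x] square-free with unit leading coefficient and ord(disc(f)) ≤ 1. If (x₀,y₀) is a k-point of y² = f(x) with x₀ ∈ O and y₀ ≠ 0, then for every root θ_i of f in the splitting field L (with valuation extended to take values in ½ℤ), ord(x₀ − θ_i) is an even integer. -/
open Polynomial

lemma addval_prod {ι L : Type*} [Field L] (v : AddValuation L (WithTop ℚ))
    (s : Finset ι) (g : ι → L) : v (∏ i ∈ s, g i) = ∑ i ∈ s, v (g i) := by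
  induction s using Finset.cons_induction with
  | empty => simpa using v.map_one
  | cons a s ha ih => rw [Finset.prod_cons, Finset.sum_cons, v.map_mul, ih]

lemma deriv_prod_XsubC {ι R : Type*} [CommRing R] [DecidableEq ι] (s : Finset ι) (a : ι → R) :
    derivative (∏ i ∈ s, (X - C (a i))) = ∑ i ∈ s, ∏ j ∈ s.erase i, (X - C (a j)) := by
  induction s using Finset.induction with
  | empty => simp
  | @insert i s hi ih =>
    rw [Finset.prod_insert hi, derivative_mul, derivative_X_sub_C, ih, Finset.sum_insert hi,
      Finset.erase_insert hi, one_mul]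
    congr 1
    rw [Finset.mul_sum]
    refine Finset.sum_congr rfl fun j hj => ?_
    rw [Finset.erase_insert_of_ne (by rintro rfl; exact hi hj),
      Finset.prod_insert (fun h => hi (Finset.mem_of_mem_erase h))]

/-- same setting as the unramifiedness lemma; if (x₀,y₀) ∈ C(k) with
x₀ ∈ O and y₀ ≠ 0, then ord(x₀ − θ_i) is an even integer for every root θ_i of f. -/
theorem stmt_4 (k L : Type*) [Field k] [CharZero k] [Field L] [Algebra k L]
    (v : AddValuation L (WithTop ℚ))
    (hvk : ∀ a : k, a ≠ 0 → ∃ m : ℤ, v (algebraMap k L a) = ((m : ℚ) : WithTop ℚ))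
    (hπ : ∃ π : k, v (algebraMap k L π) = ((1 : ℚ) : WithTop ℚ))
    -- ord extended to L takes values in (1/2)ℤ
    (hvL : ∀ a : L, a ≠ 0 → ∃ m : ℤ, v a = (((m : ℚ) / 2 : ℚ) : WithTop ℚ))
    -- odd residue characteristic p
    (p : ℕ) (hp : p.Prime) (hodd : Odd p) (hres : 0 < v ((p : L)))
    (f : k[X]) (hsf : Squarefree f)
    (hint : ∀ i, 0 ≤ v (algebraMap k L (f.coeff i)))
    (hlc : v (algebraMap k L f.leadingCoeff) = 0)
    (n : ℕ) (hn : f.natDegree = n) (θ : Fin n → L)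
    (hsplit : f.map (algebraMap k L)
        = C (algebraMap k L f.leadingCoeff) * ∏ i, (X - C (θ i)))
    (hdisc : v (∏ pr ∈ Finset.univ.filter (fun pr : Fin n × Fin n => pr.1 < pr.2),
        (θ pr.1 - θ pr.2) ^ 2) ≤ ((1 : ℚ) : WithTop ℚ))
    -- a k-point (x₀, y₀) of y² = f(x) with x₀ ∈ O and y₀ ≠ 0
    (x₀ y₀ : k) (hx₀ : 0 ≤ v (algebraMap k L x₀)) (hy₀ : y₀ ≠ 0)
    (hpt : y₀ ^ 2 = f.eval x₀) :
    ∀ i : Fin n, ∃ m : ℤ, Even m ∧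
      v (algebraMap k L x₀ - θ i) = ((m : ℚ) : WithTop ℚ) := by

  classical
  intro i
  set A := algebraMap k L with hA
  have hAinj : Function.Injective A := (algebraMap k L).injective
  set x : L := A x₀ with hx
  -- evaluation identity
  have heval : A (f.eval x₀) = A f.leadingCoeff * ∏ j, (x - θ j) := by
    have h1 : (f.map A).eval x = A (f.eval x₀) := by
      rw [eval_map, hx, eval₂_at_apply]
    have h2 := congrArg (eval x) hsplit
    rw [h1] at h2
    simpa [eval_prod] using h2
  have hy2 : A (f.eval x₀) = (A y₀) ^ 2 := by
    rw [← hpt, map_pow]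
  have hy0 : A y₀ ≠ 0 := fun h => hy₀ (hAinj (by simpa using h))
  have hne : ∀ j, x - θ j ≠ 0 := by
    intro j hj
    apply hy0
    have h0 : (A y₀) ^ 2 = 0 := by
      rw [← hy2, heval, Finset.prod_eq_zero (Finset.mem_univ j) hj, mul_zero]
    exact pow_eq_zero_iff two_ne_zero |>.mp h0
  obtain ⟨c, hc⟩ := hvk y₀ hy₀
  choose m hm using fun j => hvL (x - θ j) (hne j)
  -- roots are integral
  have hθ0 : ∀ j : Fin n, (0 : WithTop ℚ) ≤ v (θ j) := by
    intro j
    rcases eq_or_ne (θ j) 0 with h0 | h0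
    · rw [h0, v.map_zero]; exact le_top
    obtain ⟨mq, hmq⟩ := hvL (θ j) h0
    set q : ℚ := (mq : ℚ) / 2 with hq
    by_contra hneg
    push_neg at hneg
    have hqneg : q < 0 := by
      rw [hmq] at hneg
      exact_mod_cast hneg
    have hroot : (f.map A).eval (θ j) = 0 := by
      rw [hsplit, eval_mul, eval_prod,
        Finset.prod_eq_zero (Finset.mem_univ j) (by simp), mul_zero]
    have hdeg : (f.map A).natDegree = n := by
      rw [natDegree_map_eq_of_injective hAinj, hn]
    have hexp := eval_eq_sum_range (p := f.map A) (θ j)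
    rw [hroot, hdeg, Finset.sum_range_succ] at hexp
    have hcn : (f.map A).coeff n = A f.leadingCoeff := by
      rw [coeff_map, ← hn, coeff_natDegree]
    have hkey : A f.leadingCoeff * θ j ^ n
        = -∑ l ∈ Finset.range n, (f.map A).coeff l * θ j ^ l := by
      rw [← hcn]
      exact eq_neg_of_add_eq_zero_right hexp.symm
    have hnpos : 0 < n := i.pos
    have hL : v (A f.leadingCoeff * θ j ^ n) = (((n : ℚ) * q : ℚ) : WithTop ℚ) := by
      rw [v.map_mul, hlc, v.map_pow, hmq, zero_add, ← WithTop.coe_nsmul, nsmul_eq_mul]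
    have hR : ((((n : ℚ) - 1) * q : ℚ) : WithTop ℚ)
        ≤ v (-∑ l ∈ Finset.range n, (f.map A).coeff l * θ j ^ l) := by
      rw [v.map_neg]
      apply v.map_le_sum
      intro l hl
      have hl1 : l ≤ n - 1 := Nat.le_pred_of_lt (Finset.mem_range.mp hl)
      have hl' : (l : ℚ) ≤ (n : ℚ) - 1 := by
        have h2 : ((l : ℕ) : ℚ) ≤ ((n - 1 : ℕ) : ℚ) := by exact_mod_cast hl1
        rwa [Nat.cast_sub hnpos, Nat.cast_one] at h2
      have hterm : v ((f.map A).coeff l * θ j ^ l) = v (A (f.coeff l)) + l • v (θ j) := by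
        rw [coeff_map, v.map_mul, v.map_pow]
      rw [hterm, hmq, ← WithTop.coe_nsmul, nsmul_eq_mul]
      calc ((((n : ℚ) - 1) * q : ℚ) : WithTop ℚ) ≤ (((l : ℚ) * q : ℚ) : WithTop ℚ) := by
            exact_mod_cast mul_le_mul_of_nonpos_right hl' hqneg.le
        _ ≤ v (A (f.coeff l)) + (((l : ℚ) * q : ℚ) : WithTop ℚ) :=
            le_add_of_nonneg_left (hint l)
    rw [← hkey, hL] at hR
    have hqq : ((n : ℚ) - 1) * q ≤ (n : ℚ) * q := by exact_mod_cast hR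
    nlinarith [hqneg]
  -- the m j are nonnegative
  have hm0 : ∀ j, 0 ≤ m j := by
    intro j
    have h1 : (0 : WithTop ℚ) ≤ v (x - θ j) := le_trans (le_min hx₀ (hθ0 j)) (v.map_sub x (θ j))
    rw [hm j] at h1
    have : (0 : ℚ) ≤ (m j : ℚ) / 2 := by exact_mod_cast h1
    have : (0 : ℚ) ≤ (m j : ℚ) := by linarith
    exact_mod_cast this
  -- the total sum
  have hsum : ∑ j, m j = 4 * c := by
    have h2c : v ((A y₀) ^ 2) = ((2 * (c : ℚ) : ℚ) : WithTop ℚ) := by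
      rw [v.map_pow, hc, ← WithTop.coe_nsmul, nsmul_eq_mul]
      norm_num
    have h3 : ((2 * (c : ℚ) : ℚ) : WithTop ℚ)
        = ((∑ j, (m j : ℚ) / 2 : ℚ) : WithTop ℚ) := by
      rw [← h2c, ← hy2, heval, v.map_mul, hlc, zero_add, addval_prod, WithTop.coe_sum]
      exact Finset.sum_congr rfl fun j _ => hm j
    have hsumQ : 2 * (c : ℚ) = ∑ j, (m j : ℚ) / 2 := by exact_mod_cast h3
    rw [← Finset.sum_div] at hsumQ
    have h4 : (∑ j, (m j : ℚ)) = 4 * (c : ℚ) := by linarith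
    have h5 : ((∑ j, m j : ℤ) : ℚ) = ((4 * c : ℤ) : ℚ) := by push_cast; exact h4
    exact_mod_cast h5
  -- pair bounds from the discriminant
  have hvsub0 : ∀ a b : Fin n, (0 : WithTop ℚ) ≤ v (θ a - θ b) :=
    fun a b => le_trans (le_min (hθ0 a) (hθ0 b)) (v.map_sub _ _)
  have hterm0 : ∀ a b : Fin n, (0 : WithTop ℚ) ≤ v ((θ a - θ b) ^ 2) := by
    intro a b
    rw [v.map_pow, two_nsmul]
    calc (0 : WithTop ℚ) = 0 + 0 := by norm_num
      _ ≤ _ := add_le_add (hvsub0 a b) (hvsub0 a b)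
  have hdisc' : (∑ pr ∈ Finset.univ.filter (fun pr : Fin n × Fin n => pr.1 < pr.2),
      v ((θ pr.1 - θ pr.2) ^ 2)) ≤ ((1 : ℚ) : WithTop ℚ) := by
    rw [← addval_prod]
    exact hdisc
  have hone : ∀ a b : Fin n, a < b → v ((θ a - θ b) ^ 2) ≤ ((1 : ℚ) : WithTop ℚ) := by
    intro a b hab
    refine le_trans (Finset.single_le_sum (f := fun pr : Fin n × Fin n =>
      v ((θ pr.1 - θ pr.2) ^ 2)) (fun pr _ => hterm0 pr.1 pr.2)
      (show ((a, b) : Fin n × Fin n) ∈ _ from by simp [hab])) hdisc' 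
  have hsq_symm : ∀ a b : Fin n, v ((θ a - θ b) ^ 2) = v ((θ b - θ a) ^ 2) := by
    intro a b
    rw [v.map_pow, v.map_pow, v.map_sub_swap]
  have hvab : ∀ a b : Fin n, a ≠ b → v ((θ a - θ b) ^ 2) ≤ ((1 : ℚ) : WithTop ℚ) := by
    intro a b hab
    rcases lt_or_gt_of_ne hab with h | h
    · exact hone a b h
    · rw [hsq_symm]; exact hone b a h
  have key2 : ∀ pr1 pr2 : Fin n × Fin n, pr1.1 < pr1.2 → pr2.1 < pr2.2 → pr1 ≠ pr2 →
      v ((θ pr1.1 - θ pr1.2) ^ 2) + v ((θ pr2.1 - θ pr2.2) ^ 2) ≤ ((1 : ℚ) : WithTop ℚ) := by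
    intro pr1 pr2 h1 h2 hne12
    calc v ((θ pr1.1 - θ pr1.2) ^ 2) + v ((θ pr2.1 - θ pr2.2) ^ 2)
        = ∑ pr ∈ ({pr1, pr2} : Finset (Fin n × Fin n)), v ((θ pr.1 - θ pr.2) ^ 2) :=
          (Finset.sum_pair (f := fun pr : Fin n × Fin n =>
            v ((θ pr.1 - θ pr.2) ^ 2)) hne12).symm
      _ ≤ ∑ pr ∈ Finset.univ.filter (fun pr : Fin n × Fin n => pr.1 < pr.2),
            v ((θ pr.1 - θ pr.2) ^ 2) := by
          refine Finset.sum_le_sum_of_subset_of_nonneg ?_ (fun pr _ _ => hterm0 pr.1 pr.2)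
          intro pr hpr
          rcases Finset.mem_insert.mp hpr with h | h
          · subst h; simp [h1]
          · rw [Finset.mem_singleton] at h; subst h; simp [h2]
      _ ≤ _ := hdisc'
  -- lower bound for pairs of close roots
  have hW : ∀ a b : Fin n, 1 ≤ m a → 1 ≤ m b →
      ((1 : ℚ) : WithTop ℚ) ≤ v ((θ a - θ b) ^ 2) := by
    intro a b ha hb
    have h1 : (((1 : ℚ) / 2 : ℚ) : WithTop ℚ) ≤ v (θ a - θ b) := by
      have hsub : θ a - θ b = (x - θ b) - (x - θ a) := by ring
      rw [hsub]
      refine v.map_le_sub ?_ ?_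
      · rw [hm b, WithTop.coe_le_coe]
        have : (1:ℚ) ≤ (m b : ℚ) := by exact_mod_cast hb
        linarith
      · rw [hm a, WithTop.coe_le_coe]
        have : (1:ℚ) ≤ (m a : ℚ) := by exact_mod_cast ha
        linarith
    rw [v.map_pow, two_nsmul]
    calc ((1 : ℚ) : WithTop ℚ) = (((1:ℚ)/2 : ℚ) : WithTop ℚ) + (((1:ℚ)/2 : ℚ) : WithTop ℚ) := by
          rw [← WithTop.coe_add]; norm_num
      _ ≤ _ := add_le_add h1 h1
  -- two distinct close close-pair indices are impossible (three close roots)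
  have hfin : ∀ pr1 pr2 : Fin n × Fin n, pr1.1 < pr1.2 → pr2.1 < pr2.2 → pr1 ≠ pr2 →
      ((1:ℚ) : WithTop ℚ) ≤ v ((θ pr1.1 - θ pr1.2) ^ 2) →
      ((1:ℚ) : WithTop ℚ) ≤ v ((θ pr2.1 - θ pr2.2) ^ 2) → False := by
    intro pr1 pr2 h1 h2 hne12 hW1 hW2
    have hle := le_trans (add_le_add hW1 hW2) (key2 pr1 pr2 h1 h2 hne12)
    rw [← WithTop.coe_add] at hle
    have : (1 : ℚ) + 1 ≤ 1 := by exact_mod_cast hle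
    norm_num at this
  have hthree : ∀ a b l : Fin n, a ≠ b → a ≠ l → b ≠ l →
      1 ≤ m a → 1 ≤ m b → 1 ≤ m l → False := by
    intro a b l hab hal hbl ha hb hl
    rcases lt_or_gt_of_ne hab with o1 | o1 <;> rcases lt_or_gt_of_ne hal with o2 | o2
    · exact hfin (a, b) (a, l) o1 o2 (fun h => hbl (congrArg Prod.snd h))
        (hW a b ha hb) (hW a l ha hl)
    · exact hfin (a, b) (l, a) o1 o2 (fun h => hal (congrArg Prod.fst h))
        (hW a b ha hb) (hW l a hl ha)
    · exact hfin (b, a) (a, l) o1 o2 (fun h => hab ((congrArg Prod.fst h).symm))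
        (hW b a hb ha) (hW a l ha hl)
    · exact hfin (b, a) (l, a) o1 o2 (fun h => hbl (congrArg Prod.fst h))
        (hW b a hb ha) (hW l a hl ha)
  -- the derivative argument
  have hderiv : ∀ a b : Fin n, a ≠ b → m a = 1 → 2 ≤ m b →
      (∀ l : Fin n, l ≠ a → l ≠ b → m l = 0) → False := by
    intro a b hab ha hb hoth
    have h1 : (f.derivative.map A).eval x = A (f.derivative.eval x₀) := by
      rw [eval_map, hx, eval₂_at_apply]
    have hD : A (f.derivative.eval x₀)
        = A f.leadingCoeff * ∑ j, ∏ l ∈ Finset.univ.erase j, (x - θ l) := by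
      rw [← h1, ← derivative_map, hsplit, derivative_C_mul, deriv_prod_XsubC]
      simp [eval_prod, eval_finset_sum]
    have hSval : ∀ j : Fin n, v (∏ l ∈ Finset.univ.erase j, (x - θ l))
        = ((∑ l ∈ Finset.univ.erase j, (m l : ℚ) / 2 : ℚ) : WithTop ℚ) := by
      intro j
      rw [addval_prod, WithTop.coe_sum]
      exact Finset.sum_congr rfl fun l _ => hm l
    have hSb : v (∏ l ∈ Finset.univ.erase b, (x - θ l)) = (((1:ℚ)/2 : ℚ) : WithTop ℚ) := by
      rw [hSval]
      have h2 : ∑ l ∈ Finset.univ.erase b, (m l : ℚ) / 2 = 1/2 := by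
        rw [Finset.sum_eq_single a]
        · rw [ha]; norm_num
        · intro l hl hla
          rw [hoth l hla (Finset.ne_of_mem_erase hl)]
          norm_num
        · intro h
          exact absurd (Finset.mem_erase.mpr ⟨hab, Finset.mem_univ a⟩) h
      rw [h2]
    have hrest : ∀ j ∈ Finset.univ.erase b,
        ((1:ℚ) : WithTop ℚ) ≤ v (∏ l ∈ Finset.univ.erase j, (x - θ l)) := by
      intro j hj
      rw [hSval, WithTop.coe_le_coe]
      have hbmem : b ∈ Finset.univ.erase j :=
        Finset.mem_erase.mpr ⟨(Finset.ne_of_mem_erase hj).symm, Finset.mem_univ b⟩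
      calc (1:ℚ) ≤ (m b : ℚ) / 2 := by
            have : (2:ℚ) ≤ (m b : ℚ) := by exact_mod_cast hb
            linarith
        _ ≤ _ := Finset.single_le_sum (f := fun l => (m l : ℚ) / 2)
            (fun l _ => by have := hm0 l
                           have : (0:ℚ) ≤ (m l : ℚ) := by exact_mod_cast this
                           linarith) hbmem
    have htot : v (∑ j, ∏ l ∈ Finset.univ.erase j, (x - θ l))
        = (((1:ℚ)/2 : ℚ) : WithTop ℚ) := by
      rw [← Finset.add_sum_erase _ _ (Finset.mem_univ b),
        AddValuation.map_add_eq_of_lt_left]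
      · exact hSb
      · rw [hSb]
        refine lt_of_lt_of_le ?_ (v.map_le_sum hrest)
        exact_mod_cast (by norm_num : (1/2 : ℚ) < 1)
    have hval : v (A (f.derivative.eval x₀)) = (((1:ℚ)/2 : ℚ) : WithTop ℚ) := by
      rw [hD, v.map_mul, hlc, zero_add, htot]
    have hne0 : f.derivative.eval x₀ ≠ 0 := by
      intro h
      rw [h, map_zero, v.map_zero] at hval
      exact (WithTop.top_ne_coe).elim (by exact_mod_cast hval)
    obtain ⟨mm, hmm⟩ := hvk _ hne0
    rw [hval] at hmm
    have h3 : (1:ℚ)/2 = (mm : ℚ) := by exact_mod_cast hmm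
    have h4' : 2 * (mm:ℚ) = 1 := by linarith
    have h4 : (2 * mm : ℤ) = 1 := by exact_mod_cast h4' 
    omega
  -- at most one root close to x₀
  have claimB : ∀ a b : Fin n, a ≠ b → 1 ≤ m a → 1 ≤ m b → False := by
    intro a b hab ha hb
    have hmin : m a = 1 ∨ m b = 1 := by
      have h1 := hvab a b hab
      set μ : ℤ := min (m a) (m b) with hμ
      have h2 : (((μ : ℚ) / 2 : ℚ) : WithTop ℚ) ≤ v (θ a - θ b) := by
        have hsub : θ a - θ b = (x - θ b) - (x - θ a) := by ring
        rw [hsub]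
        refine v.map_le_sub ?_ ?_
        · rw [hm b, WithTop.coe_le_coe]
          have : (μ : ℚ) ≤ (m b : ℚ) := by exact_mod_cast min_le_right (m a) (m b)
          linarith
        · rw [hm a, WithTop.coe_le_coe]
          have : (μ : ℚ) ≤ (m a : ℚ) := by exact_mod_cast min_le_left (m a) (m b)
          linarith
      have h3 : ((μ : ℚ) : WithTop ℚ) ≤ v ((θ a - θ b) ^ 2) := by
        rw [v.map_pow, two_nsmul]
        calc ((μ : ℚ) : WithTop ℚ)
            = (((μ:ℚ)/2 : ℚ) : WithTop ℚ) + (((μ:ℚ)/2 : ℚ) : WithTop ℚ) := by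
              rw [← WithTop.coe_add]; norm_num
          _ ≤ _ := add_le_add h2 h2
      have h4 : (μ : ℚ) ≤ 1 := by exact_mod_cast le_trans h3 h1
      have h5 : μ ≤ 1 := by exact_mod_cast h4
      omega
    have hoth : ∀ l : Fin n, l ≠ a → l ≠ b → m l = 0 := by
      intro l hla hlb
      by_contra hl
      have hl1 : 1 ≤ m l := by have := hm0 l; omega
      exact hthree a b l hab hla.symm hlb.symm ha hb hl1
    have hab4 : m a + m b = 4 * c := by
      have h6 : ∑ j, m j = ∑ j ∈ ({a, b} : Finset (Fin n)), m j := by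
        symm
        apply Finset.sum_subset (Finset.subset_univ _)
        intro l _ hlmem
        simp only [Finset.mem_insert, Finset.mem_singleton] at hlmem
        push_neg at hlmem
        exact hoth l hlmem.1 hlmem.2
      rw [h6, Finset.sum_pair hab] at hsum
      exact hsum
    rcases hmin with h1 | h1
    · rcases eq_or_lt_of_le hb with h2 | h2
      · omega
      · exact hderiv a b hab h1 (by omega) hoth
    · rcases eq_or_lt_of_le ha with h2 | h2
      · omega
      · exact hderiv b a hab.symm h1 (by omega) (fun l hlb hla => hoth l hla hlb)
  -- conclusion
  rcases eq_or_lt_of_le (hm0 i) with h0 | h0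
  · refine ⟨0, Even.zero, ?_⟩
    rw [hm i, ← h0]
    norm_num
  · have h1 : 1 ≤ m i := h0
    have hall : ∀ j, j ≠ i → m j = 0 := by
      intro j hj
      by_contra hjm
      exact claimB i j hj.symm h1 (by have := hm0 j; omega)
    have hi4 : m i = 4 * c := by
      have h6 : ∑ j, m j = m i :=
        Finset.sum_eq_single i (fun j _ hj => hall j hj)
          (fun h => absurd (Finset.mem_univ i) h)
      rw [h6] at hsum
      exact hsum
    refine ⟨2 * c, even_two_mul c, ?_⟩
    rw [hm i]
    have h7 : ((m i : ℚ)) / 2 = ((2 * c : ℤ) : ℚ) := by rw [hi4]; push_cast; ring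
    rw [h7]
end

section
/- Let k be a complete discretely valued field of characteristic 0, L = k[x]/(g(x)) for an irreducible polynomial g ∈ k[x], θ the image of x, and ord_k the valuation on k (ord_k(π)=1 for a uniformizer π). Suppose x₀ ∈ O and e ≥ 0 satisfy: for every ε ∈ O, ord_k(g(x₀ + ε·π^e) − g(x₀)) > ord_k(g(x₀)) (uniformly, in the sense that the valuation of the polynomial g(x₀+π^e·T) − g(x₀) in O[T] exceeds ord_k(g(x₀))). Then for every x₁ ∈ x₀ + π^{e+ord_k(4)}·O, the product (x₀−θ)(x₁−θ) is a square in L*. -/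
/-!
Write `A = x₀ - θ`. If `ord A ≥ e`, then `T = (θ - x₀)/π^e` is integral and `P(T) = -g(x₀)` for
`P(T) = g(x₀ + π^e T) - g(x₀)`; but every coefficient of `P` has larger order than `g(x₀)`, so
`P(T)` does too. Hence `ord A < e`, and `(x₀ - θ)(x₁ - θ) = A² (1 + u)` with `u = (x₁ - x₀)/A` of
order larger than `ord 4`. Such a `1 + u` is a square in the complete field `L`: the contraction
`s ↦ u/4 - s²` has a fixed point `b`, and `1 + u = (1 + 2b)²`.
-/

open Polynomial Filter

namespace Valued

variable {R Γ₀ : Type*} [LinearOrderedCommGroupWithZero Γ₀]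

theorem cauchySeq_of_map_sub_le_pow [Ring R] [Valued R Γ₀] [MulArchimedean Γ₀] {f : ℕ → R}
    {x : R} (hx : v x < 1) (hf : ∀ n, v (f (n + 1) - f n) ≤ v x ^ n) : CauchySeq f := by
  have hdist : ∀ n k, v (f (n + k) - f n) ≤ v x ^ n := by
    intro n k
    induction k with
    | zero => simp
    | succ k ih =>
      rw [← add_assoc, ← sub_add_sub_cancel]
      exact v.map_add_le ((hf _).trans (pow_le_pow_right_of_le_one' hx.le (by omega))) ih
  rw [(hasBasis_uniformity R Γ₀).cauchySeq_iff']
  intro γ _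
  obtain ⟨N, hN⟩ := exists_pow_lt₀ hx
    (Units.map (MonoidWithZeroHom.ValueGroup₀.embedding (f := .ofClass (v : Valuation R Γ₀))) γ)
  refine ⟨N, fun n hn => ?_⟩
  obtain ⟨k, rfl⟩ := Nat.exists_eq_add_of_le hn
  rw [Set.mem_ofPred_eq, Valuation.restrict_lt_iff_lt_embedding, Valuation.map_sub_swap]
  exact (hdist N k).trans_lt hN

variable {K : Type*} [Field K] [Valued K Γ₀] [MulArchimedean Γ₀] [CompleteSpace K]

theorem exists_add_sq_eq_of_lt_one {a : K} (ha : v a < 1) : ∃ b : K, b + b ^ 2 = a := by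
  set t : ℕ → K := fun n => (fun s => a - s ^ 2)^[n] 0
  have ht : ∀ n, t (n + 1) = a - t n ^ 2 := fun n => Function.iterate_succ_apply' _ n 0
  have hbound : ∀ n, v (t n) ≤ v a := by
    intro n
    induction n with
    | zero => simp [t]
    | succ n ih =>
      rw [ht]
      refine v.map_sub_le le_rfl ?_
      rw [map_pow]
      exact (pow_le_pow_left₀ zero_le ih 2).trans (sq_le zero_le ha.le)
  have hstep : ∀ n, v (t (n + 1) - t n) ≤ v a ^ n := by
    intro n
    induction n with
    | zero => simpa [ht, t] using ha.le
    | succ n ih =>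
      have : t (n + 2) - t (n + 1) = (t n - t (n + 1)) * (t n + t (n + 1)) := by
        rw [ht (n + 1), ht n]; ring
      rw [this, map_mul, Valuation.map_sub_swap, pow_succ]
      exact mul_le_mul' ih (v.map_add_le (hbound n) (hbound (n + 1)))
  obtain ⟨b, hb⟩ := cauchySeq_tendsto_of_complete (cauchySeq_of_map_sub_le_pow ha hstep)
  have hfix : Tendsto (fun n => t (n + 1)) atTop (nhds (a - b ^ 2)) := by
    simpa only [ht] using tendsto_const_nhds.sub (hb.pow 2)
  refine ⟨b, ?_⟩
  linear_combination tendsto_nhds_unique (hb.comp (tendsto_add_atTop_nat 1)) hfix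

theorem exists_one_add_eq_sq_of_lt_four {u : K} (hu : v u < v (4 : K)) :
    ∃ z : K, 1 + u = z ^ 2 := by
  have h4 : (4 : K) ≠ 0 := v.ne_zero_iff.mp (zero_le.trans_lt hu).ne'
  obtain ⟨b, hb⟩ := exists_add_sq_eq_of_lt_one (a := u / 4) <| by
    rwa [map_div₀, div_lt_one₀ (zero_le.trans_lt hu)]
  refine ⟨1 + 2 * b, ?_⟩
  field_simp at hb
  linear_combination -hb

end Valued

theorem Valuation.map_aeval_lt {K L Γ₀ : Type*} [CommRing K] [CommRing L] [Algebra K L]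
    [LinearOrderedCommMonoidWithZero Γ₀] (w : Valuation L Γ₀) {P : K[X]} {γ : Γ₀} (hγ : γ ≠ 0)
    (hP : ∀ i, w (algebraMap K L (P.coeff i)) < γ) {T : L} (hT : w T ≤ 1) :
    w (aeval T P) < γ := by
  rw [aeval_eq_sum_range]
  refine w.map_sum_lt hγ fun i _ => ?_
  rw [Algebra.smul_def, map_mul, map_pow]
  exact (mul_le_of_le_one_right' (pow_le_one' hT i)).trans_lt (hP i)

theorem Valuation.map_lt_map_sub_root_of_coeff_lt {K L Γ₀ : Type*} [Field K] [Field L]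
    [Algebra K L] [LinearOrderedCommGroupWithZero Γ₀] (w : Valuation L Γ₀) {g : K[X]} {θ : L}
    (hθ : aeval θ g = 0) {x₀ ϖ : K} (hϖ : ϖ ≠ 0)
    (hcoeff : ∀ i, w (algebraMap K L ((g.comp (C x₀ + C ϖ * X) - C (g.eval x₀)).coeff i))
      < w (algebraMap K L (g.eval x₀))) :
    w (algebraMap K L ϖ) < w (algebraMap K L x₀ - θ) := by
  by_contra! hle
  have hϖ' : algebraMap K L ϖ ≠ 0 := (_root_.map_ne_zero _).mpr hϖ
  set T := (θ - algebraMap K L x₀) / algebraMap K L ϖ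
  have hT : w T ≤ 1 := by
    rwa [map_div₀, div_le_one₀ (w.pos_iff.mpr hϖ'), w.map_sub_swap]
  have hroot : aeval T (g.comp (C x₀ + C ϖ * X) - C (g.eval x₀))
      = -algebraMap K L (g.eval x₀) := by
    have : algebraMap K L x₀ + algebraMap K L ϖ * T = θ := by
      rw [mul_div_cancel₀ _ hϖ']; ring
    simp [aeval_comp, this, hθ]
  have hγ : w (algebraMap K L (g.eval x₀)) ≠ 0 := (zero_le.trans_lt (hcoeff 0)).ne'
  have := w.map_aeval_lt hγ hcoeff hT
  rw [hroot, map_neg] at this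
  exact lt_irrefl _ this

theorem stmt_6_general (K L : Type*) [Field K]
    [Valued K (WithZero (Multiplicative ℤ))]
    [Field L] [Algebra K L] [Valued L (WithZero (Multiplicative ℤ))] [CompleteSpace L]
    -- the valuation on L extends the one on K, with ramification index e₀
    (e₀ : ℕ) (he₀ : 0 < e₀)
    (hcompat : ∀ a : K, Valued.v (algebraMap K L a) = (Valued.v a) ^ e₀)
    -- uniformizer of K
    (π : K) (hπ : Valued.v π
      = ((Multiplicative.ofAdd (-1 : ℤ) : Multiplicative ℤ) : WithZero (Multiplicative ℤ)))
    -- L = K[x]/(g) = K(θ)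
    (g : K[X])
    (θ : L) (hθ : aeval θ g = 0)
    -- c = ord_K(4)
    (c : ℕ) (h4 : Valued.v (4 : K)
      = ((Multiplicative.ofAdd (-(c : ℤ)) : Multiplicative ℤ) : WithZero (Multiplicative ℤ)))
    -- x₀ ∈ O and e ≥ 0 with ord(g(x₀ + π^e·T) − g(x₀)) > ord(g(x₀)) coefficientwise
    (x₀ : K) (e : ℕ)
    (hkey : ∀ i, Valued.v ((g.comp (C x₀ + C (π ^ e) * X) - C (g.eval x₀)).coeff i)
      < Valued.v (g.eval x₀)) :
    ∀ x₁ : K, Valued.v (x₁ - x₀) ≤ Valued.v (π ^ (e + c)) →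
      ∃ z : L, (algebraMap K L x₀ - θ) * (algebraMap K L x₁ - θ) = z ^ 2 := by
  intro x₁ hx₁
  set f := algebraMap K L
  have hlt (a b : K) : Valued.v (f a) < Valued.v (f b) ↔ Valued.v a < Valued.v b := by
    rw [hcompat, hcompat, pow_lt_pow_iff_left₀ zero_le zero_le he₀.ne']
  have hle (a b : K) : Valued.v (f a) ≤ Valued.v (f b) ↔ Valued.v a ≤ Valued.v b := by
    rw [hcompat, hcompat, pow_le_pow_iff_left₀ zero_le zero_le he₀.ne']
  have hπ0 : π ≠ 0 := by rintro rfl; simp at hπ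
  have hπc : Valued.v (f (π ^ c)) = Valued.v (f 4) := by
    rw [hcompat, hcompat, map_pow, hπ, h4, ← WithZero.coe_pow, ← ofAdd_nsmul]; simp
  set A := f x₀ - θ
  have hA : Valued.v (f (π ^ e)) < Valued.v A :=
    Valued.v.map_lt_map_sub_root_of_coeff_lt hθ (pow_ne_zero e hπ0) fun i =>
      (hlt _ _).mpr (hkey i)
  have hA0 : A ≠ 0 := Valued.v.ne_zero_iff.mp (zero_le.trans_lt hA).ne'
  have hu : Valued.v (f (x₁ - x₀) / A) < Valued.v (4 : L) := by
    have h4L : 0 < Valued.v (f 4) := by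
      rw [← hπc, Valuation.pos_iff]; exact (_root_.map_ne_zero f).mpr (pow_ne_zero c hπ0)
    rw [map_div₀, div_lt_iff₀ (zero_le.trans_lt hA), ← map_ofNat f, mul_comm]
    calc Valued.v (f (x₁ - x₀)) ≤ Valued.v (f (π ^ e)) * Valued.v (f 4) := by
          rw [← hπc, ← map_mul, ← map_mul, ← pow_add]; exact (hle _ _).mpr hx₁
      _ < Valued.v A * Valued.v (f 4) := mul_lt_mul_of_pos_right hA h4L
  obtain ⟨z, hz⟩ := Valued.exists_one_add_eq_sq_of_lt_four hu
  refine ⟨A * z, ?_⟩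
  rw [map_sub] at hz
  field_simp at hz
  linear_combination A * hz

/-- square-detection lemma. K complete discretely valued of char 0,
L = K(θ) with θ a root of the irreducible g ∈ K[x], the valuation of L extending
that of K (with ramification index e₀). If the polynomial g(x₀+π^e·T) − g(x₀) has
all coefficients of valuation strictly larger than ord(g(x₀)), then for every
x₁ ∈ x₀ + π^{e+ord(4)}·O, the product (x₀−θ)(x₁−θ) is a square in L*. -/
theorem stmt_6 (K L : Type*) [Field K]
    [Valued K (WithZero (Multiplicative ℤ))] [CompleteSpace K] [CharZero K]
    [Field L] [Algebra K L] [Valued L (WithZero (Multiplicative ℤ))] [CompleteSpace L]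
    -- the valuation on L extends the one on K, with ramification index e₀
    (e₀ : ℕ) (he₀ : 0 < e₀)
    (hcompat : ∀ a : K, Valued.v (algebraMap K L a) = (Valued.v a) ^ e₀)
    -- uniformizer of K
    (π : K) (hπ : Valued.v π
      = ((Multiplicative.ofAdd (-1 : ℤ) : Multiplicative ℤ) : WithZero (Multiplicative ℤ)))
    -- L = K[x]/(g) = K(θ)
    (g : K[X]) (hirr : Irreducible g)
    (θ : L) (hθ : aeval θ g = 0) (hgen : Algebra.adjoin K {θ} = ⊤)
    -- c = ord_K(4)
    (c : ℕ) (h4 : Valued.v (4 : K)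
      = ((Multiplicative.ofAdd (-(c : ℤ)) : Multiplicative ℤ) : WithZero (Multiplicative ℤ)))
    -- x₀ ∈ O and e ≥ 0 with ord(g(x₀ + π^e·T) − g(x₀)) > ord(g(x₀)) coefficientwise
    (x₀ : K) (hx₀ : Valued.v x₀ ≤ 1) (e : ℕ)
    (hkey : ∀ i, Valued.v ((g.comp (C x₀ + C (π ^ e) * X) - C (g.eval x₀)).coeff i)
      < Valued.v (g.eval x₀)) :
    ∀ x₁ : K, Valued.v (x₁ - x₀) ≤ Valued.v (π ^ (e + c)) →
      ∃ z : L, (algebraMap K L x₀ - θ) * (algebraMap K L x₁ - θ) = z ^ 2 :=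
  stmt_6_general K L e₀ he₀ hcompat π hπ g θ hθ c h4 x₀ e hkey
end

section
/- Let X be a smooth projective geometrically irreducible curve of genus g over a finite field F_q. If √q + 1/√q > 2g, then X has an F_q-rational point. -/
lemma mul_lt_sq_add_one_of_lt_add_inv {s c : ℝ} (hs : 0 ≤ s) (h : c < s + s⁻¹) :
    c * s < s ^ 2 + 1 := by
  rcases hs.eq_or_lt with rfl | hs
  · simp
  calc c * s < (s + s⁻¹) * s := mul_lt_mul_of_pos_right h hs
    _ = s ^ 2 + 1 := by field_simp

theorem stmt_9_general (q g N : ℕ)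
    (hWeil : |(N : ℝ) - ((q : ℝ) + 1)| ≤ 2 * (g : ℝ) * Real.sqrt q)
    (h : Real.sqrt q + 1 / Real.sqrt q > 2 * (g : ℝ)) :
    0 < N := by
  have hq : 2 * (g : ℝ) * Real.sqrt q < q + 1 := by
    rw [one_div] at h
    simpa [Real.sq_sqrt (Nat.cast_nonneg q)] using
      mul_lt_sq_add_one_of_lt_add_inv (Real.sqrt_nonneg q) h
  have hN := (abs_le.mp hWeil).1
  exact_mod_cast (by linarith : (0 : ℝ) < N)

/-- a smooth projective geometrically irreducible curve of genus g over F_q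
(so that its number N of F_q-points satisfies the Weil bound |N − (q+1)| ≤ 2g√q)
with √q + 1/√q > 2g has an F_q-rational point, i.e. N > 0. -/
theorem stmt_9 (q g N : ℕ) (hq : ∃ p m : ℕ, p.Prime ∧ q = p ^ m ∧ 0 < m)
    (hWeil : |(N : ℝ) - ((q : ℝ) + 1)| ≤ 2 * (g : ℝ) * Real.sqrt q)
    (h : Real.sqrt q + 1 / Real.sqrt q > 2 * (g : ℝ)) :
    0 < N :=
  stmt_9_general q g N hWeil h
end

section
/- The hyperelliptic curve C: y² = 2x⁶ + x + 2 has no rational points over ℚ. -/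
/-!
Write `x = a / b` in lowest terms; a rational point makes `2a⁶ + ab⁵ + 2b⁶` an integer square.
Modulo a prime `p` dividing `a`, `b` or `2a + b` this form is `2 (b³)²`, `2 (a³)²` or
`98 a⁶ = 2 (7a³)²`, with a unit base, so `2` is a square mod `p`. By multiplicativity of the
Jacobi symbol `(2/·) = χ₈`, each of `a`, `b`, `2a + b` is then even or `≡ ±1 (mod 8)`, and no
square modulo `8` is compatible with this. At infinity one would need `√2 ∈ ℚ`.
-/

open ZMod

theorem isSquare_of_mul_sq_eq_sq {K : Type*} [Field K] {x w c : K} (hw : w ≠ 0)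
    (h : x * w ^ 2 = c ^ 2) : IsSquare x :=
  ⟨c / w, by field_simp; linear_combination h⟩

theorem isSquare_two_of_isSquare_sextic {K : Type*} [Field K] {a b : K} (hab : IsCoprime a b)
    (h7 : (7 : K) ≠ 0) (hsq : IsSquare (2 * a ^ 6 + a * b ^ 5 + 2 * b ^ 6))
    (hprod : a * b * (2 * a + b) = 0) : IsSquare (2 : K) := by
  obtain ⟨c, hc⟩ := hsq
  rcases mul_eq_zero.mp hprod with hab0 | hL
  · rcases mul_eq_zero.mp hab0 with rfl | rfl
    · have hb : b ≠ 0 := (isCoprime_zero_left.mp hab).ne_zero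
      exact isSquare_of_mul_sq_eq_sq (c := c) (pow_ne_zero 3 hb) (by linear_combination hc)
    · have ha : a ≠ 0 := (isCoprime_zero_right.mp hab).ne_zero
      exact isSquare_of_mul_sq_eq_sq (c := c) (pow_ne_zero 3 ha) (by linear_combination hc)
  · obtain rfl : b = -2 * a := by linear_combination hL
    have ha : a ≠ 0 := by
      rintro rfl
      simp at hab
    exact isSquare_of_mul_sq_eq_sq (c := c) (mul_ne_zero h7 (pow_ne_zero 3 ha))
      (by linear_combination hc)

theorem isSquare_two_zmod_of_isSquare_sextic {a b : ℤ} (hab : IsCoprime a b)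
    (hsq : IsSquare (2 * a ^ 6 + a * b ^ 5 + 2 * b ^ 6)) {p : ℕ} (hp : p.Prime)
    (hdvd : (p : ℤ) ∣ a * b * (2 * a + b)) : IsSquare (2 : ZMod p) := by
  have := Fact.mk hp
  by_cases hp7 : p = 7
  · subst hp7; decide
  have h7 : (7 : ZMod p) ≠ 0 := by
    rw [← Nat.cast_ofNat, Ne, ZMod.natCast_eq_zero_iff,
      Nat.prime_dvd_prime_iff_eq hp (by norm_num)]
    exact hp7
  have hsq' := hsq.map (Int.castRingHom (ZMod p))
  have hdvd' := (ZMod.intCast_zmod_eq_zero_iff_dvd _ p).mpr hdvd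
  rw [eq_intCast] at hsq'
  push_cast at hsq' hdvd'
  exact isSquare_two_of_isSquare_sextic hab.intCast h7 hsq' hdvd'

theorem χ₈_nat_ne_neg_one_of_forall_prime_dvd {n : ℕ}
    (h : ∀ p : ℕ, p.Prime → p ∣ n → IsSquare (2 : ZMod p)) : χ₈ n ≠ -1 := by
  intro hn
  have hodd : Odd n := by
    rw [Nat.odd_iff]
    by_contra hev
    rw [χ₈_nat_eq_if_mod_eight, if_pos (by omega)] at hn
    exact absurd hn (by decide)
  rw [← jacobiSym.at_two hodd] at hn
  obtain ⟨p, hp, hpn, hJ⟩ := jacobiSym.eq_neg_one_at_prime_divisor_of_eq_neg_one hn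
  have := Fact.mk hp
  exact ZMod.nonsquare_iff_jacobiSym_eq_neg_one.mp hJ (by exact_mod_cast h p hp hpn)

theorem χ₈_int_ne_neg_one_of_forall_prime_dvd {n : ℤ}
    (h : ∀ p : ℕ, p.Prime → (p : ℤ) ∣ n → IsSquare (2 : ZMod p)) : χ₈ n ≠ -1 := by
  have hχ : χ₈ n = χ₈ n.natAbs := by
    rw [χ₈_int_eq_if_mod_eight, χ₈_nat_eq_if_mod_eight]
    split_ifs <;> omega
  rw [hχ]
  exact χ₈_nat_ne_neg_one_of_forall_prime_dvd fun p hp hpn =>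
    h p hp (Int.ofNat_dvd_left.mpr hpn)

theorem not_isSquare_sextic_zmod_eight : ∀ a b : ZMod 8, IsCoprime a b →
    χ₈ a ≠ -1 → χ₈ b ≠ -1 → χ₈ (2 * a + b) ≠ -1 →
    ¬ IsSquare (2 * a ^ 6 + a * b ^ 5 + 2 * b ^ 6) := by
  unfold IsCoprime
  decide

theorem not_isSquare_sextic {a b : ℤ} (hab : IsCoprime a b) :
    ¬ IsSquare (2 * a ^ 6 + a * b ^ 5 + 2 * b ^ 6) := by
  intro hsq
  have hχ {n : ℤ} (hn : n ∣ a * b * (2 * a + b)) : χ₈ n ≠ -1 :=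
    χ₈_int_ne_neg_one_of_forall_prime_dvd fun p hp hpn =>
      isSquare_two_zmod_of_isSquare_sextic hab hsq hp (hpn.trans hn)
  have ha := hχ (dvd_mul_of_dvd_left (dvd_mul_right a b) _)
  have hb := hχ (dvd_mul_of_dvd_left (dvd_mul_left b a) _)
  have hL := hχ (dvd_mul_left (2 * a + b) _)
  have hsq8 := hsq.map (Int.castRingHom (ZMod 8))
  rw [eq_intCast] at hsq8
  push_cast at hL hsq8
  exact not_isSquare_sextic_zmod_eight _ _ hab.intCast ha hb hL hsq8

theorem isSquare_sextic_of_sq_eq {x y : ℚ} (h : y ^ 2 = 2 * x ^ 6 + x + 2) :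
    IsSquare (2 * x.num ^ 6 + x.num * (x.den : ℤ) ^ 5 + 2 * (x.den : ℤ) ^ 6) := by
  rw [← Rat.isSquare_intCast_iff]
  refine ⟨y * x.den ^ 3, ?_⟩
  have hx : x * x.den = x.num := Rat.mul_den_eq_num x
  push_cast
  rw [← hx]
  linear_combination -(x.den : ℚ) ^ 6 * h

/-- the smooth projective hyperelliptic curve C : y² = 2x⁶ + x + 2 has no
rational points: no affine rational points, and (since 2 is not a rational square) no
rational points at infinity either. -/
theorem stmt_13 :
    (¬ ∃ x y : ℚ, y ^ 2 = 2 * x ^ 6 + x + 2) ∧ (¬ ∃ y : ℚ, y ^ 2 = 2) := by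
  constructor
  · rintro ⟨x, y, h⟩
    exact not_isSquare_sextic x.isCoprime_num_den (isSquare_sextic_of_sq_eq h)
  · rintro ⟨y, hy⟩
    exact (by norm_num : ¬ IsSquare (2 : ℚ)) ⟨y, by rw [← hy, sq]⟩
end

section
/- The polynomial f(x) = 2x⁶ + x + 2 is irreducible over ℚ, and in the ring of integers O of the number field A = ℚ[x]/(f), the ideal (2) factors as 𝔭·𝔮⁵ with 𝔭 of residue degree 1 and 𝔮 of residue degree 1 and ramification index 5. -/
/-!
A root `θ` of `2X⁶ + X + 2` is not an algebraic integer: modulo 2 the polynomial is `X`, so the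
monic minimal polynomial over `ℤ` of an integral root would be linear, and there is no integer
root. Hence `θ` has a pole at some prime `𝔮` of `𝓞 K`, where `2θ⁶ = -(θ + 2)` gives
`v_𝔮(2) = -5 v_𝔮(θ)`: the ramification index of `𝔮` over `2` is a positive multiple of `5`.
By the fundamental identity `∑ e f = [K : ℚ]`, every number field containing a root has degree
at least `5`; applied to `ℚ[X]/(q)` this shows every irreducible factor `q` has degree at least
`5`, so the sextic is irreducible. In degree `6` the identity leaves room only for `e(𝔮) = 5`,
`f(𝔮) = 1` and one more prime `𝔭` with `e(𝔭) = f(𝔭) = 1`.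
-/

open Polynomial NumberField

lemma Finset.exists_eq_pair_of_sum_eq_add_one {ι : Type*} [DecidableEq ι] {s : Finset ι}
    {g : ι → ℕ} (hg : ∀ i ∈ s, 0 < g i) {q : ι} (hq : q ∈ s) (h : ∑ i ∈ s, g i = g q + 1) :
    ∃ p, p ≠ q ∧ g p = 1 ∧ s = {p, q} := by
  have hrest : ∑ i ∈ s.erase q, g i = 1 := by
    rw [← Finset.add_sum_erase s g hq] at h; omega
  obtain ⟨p, hp⟩ : ∃ p, s.erase q = {p} := by
    refine Finset.card_eq_one.mp (le_antisymm ?_ ?_)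
    · simpa [hrest] using Finset.card_nsmul_le_sum (s.erase q) g 1
        fun i hi ↦ hg i (Finset.mem_of_mem_erase hi)
    · exact Finset.card_pos.mpr (Finset.nonempty_of_sum_ne_zero (f := g) (by simp [hrest]))
  have hpq : p ≠ q := Finset.ne_of_mem_erase (hp ▸ Finset.mem_singleton_self p)
  refine ⟨p, hpq, by simpa [hp] using hrest, ?_⟩
  rw [← Finset.insert_erase hq, hp, Finset.pair_comm]

namespace IsDedekindDomain.HeightOneSpectrum

variable {R : Type*} [CommRing R] [IsDedekindDomain R]

lemma exists_one_lt_valuation_of_notMem_range (K : Type*) [Field K] [Algebra R K]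
    [IsFractionRing R K] {x : K} (hx : x ∉ (algebraMap R K).range) :
    ∃ v : HeightOneSpectrum R, 1 < v.valuation K x := by
  by_contra! h
  exact hx (mem_integers_of_valuation_le_one K x h)

lemma intValuation_algebraMap_eq_exp_neg_ramificationIdx' {A : Type*} [CommRing A]
    [Algebra A R] (v : HeightOneSpectrum R) {a : A} (ha : algebraMap A R a ≠ 0) :
    v.intValuation (algebraMap A R a) =
      WithZero.exp (-((Ideal.span {a}).ramificationIdx' v.asIdeal : ℤ)) := by
  have hmap : (Ideal.span {a}).map (algebraMap A R) = Ideal.span {algebraMap A R a} := by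
    rw [Ideal.map_span, Set.image_singleton]
  rw [intValuation_eq_exp_neg_multiplicity v ha,
    Ideal.IsDedekindDomain.ramificationIdx'_eq_multiplicity (by simpa [hmap] using ha) v.isPrime,
    hmap]

end IsDedekindDomain.HeightOneSpectrum

instance Int.isMaximal_span_two : (Ideal.span {(2 : ℤ)}).IsMaximal := by
  simpa using Int.ideal_span_isMaximal_of_prime 2

lemma Ideal.ramificationIdx_mul_inertiaDeg_pos {R S : Type*} [CommRing R] [CommRing S]
    [Algebra R S] [Module.Finite R S] {p : Ideal R} {P : Ideal S} (hP : P ∈ p.primesOver S) :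
    0 < P.ramificationIdx R * P.inertiaDeg R := by
  have := hP.1
  exact Nat.mul_pos (P.ramificationIdx_pos R) (P.inertiaDeg_pos R)

lemma two_mul_pow_six_add_self_add_two_pos (r : ℤ) : 0 < 2 * r ^ 6 + r + 2 := by
  have h : r ^ 2 ≤ r ^ 6 := by
    rw [show r ^ 6 = (r ^ 2) ^ 3 by ring]
    rcases (sq_nonneg r).eq_or_lt with h | h
    · rw [← h]; norm_num
    · exact le_self_pow₀ (by nlinarith) (by norm_num)
  nlinarith [sq_nonneg (4 * r + 1)]

lemma map_two_mul_X_pow_six_add_X_add_two_zmod_two :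
    (2 * X ^ 6 + X + 2 : ℤ[X]).map (Int.castRingHom (ZMod 2)) = X := by
  have h2 : (2 : (ZMod 2)[X]) = 0 := by
    rw [← C_ofNat, show (OfNat.ofNat 2 : ZMod 2) = 0 from rfl, C_0]
  simp [h2]

lemma not_isIntegral_of_two_mul_pow_six_add_self_add_two_eq_zero {K : Type*} [Field K]
    [CharZero K] {θ : K} (hθ : 2 * θ ^ 6 + θ + 2 = 0) : ¬ IsIntegral ℤ θ := by
  intro hint
  have hdvd : minpoly ℤ θ ∣ 2 * X ^ 6 + X + 2 :=
    minpoly.isIntegrallyClosed_dvd hint (by simpa [map_ofNat] using hθ)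
  have hdeg : (minpoly ℤ θ).natDegree ≤ 1 := by
    have := map_dvd (Int.castRingHom (ZMod 2)) hdvd
    rw [map_two_mul_X_pow_six_add_X_add_two_zmod_two] at this
    simpa [(minpoly.monic hint).natDegree_map] using natDegree_le_of_dvd this X_ne_zero
  obtain ⟨r, rfl⟩ : θ ∈ (algebraMap ℤ K).range :=
    minpoly.natDegree_eq_one_iff.mp (hdeg.antisymm (minpoly.natDegree_pos hint))
  have : ((2 * r ^ 6 + r + 2 : ℤ) : K) = 0 := by simpa using hθ
  exact (two_mul_pow_six_add_self_add_two_pos r).ne' (by exact_mod_cast this)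

lemma natDegree_two_mul_X_pow_six_add_X_add_two : (2 * X ^ 6 + X + 2 : ℚ[X]).natDegree = 6 := by
  compute_degree!

namespace NumberField

variable {K : Type*} [Field K] [NumberField K]

variable (K) in
lemma sum_ramificationIdx_mul_inertiaDeg (p : Ideal ℤ) [p.IsMaximal] :
    ∑ P ∈ (p.primesOver (𝓞 K)).toFinset, P.ramificationIdx ℤ * P.inertiaDeg ℤ =
      Module.finrank ℚ K := by
  rw [← Finset.sum_set_coe, Ideal.sum_ramification_inertia_eq_finrank, RingOfIntegers.rank]

lemma ramificationIdx_mul_inertiaDeg_le_finrank {p : Ideal ℤ} [p.IsMaximal] {P : Ideal (𝓞 K)}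
    (hP : P ∈ p.primesOver (𝓞 K)) :
    P.ramificationIdx ℤ * P.inertiaDeg ℤ ≤ Module.finrank ℚ K := by
  rw [← sum_ramificationIdx_mul_inertiaDeg K p]
  exact Finset.single_le_sum (f := fun P ↦ P.ramificationIdx ℤ * P.inertiaDeg ℤ)
    (fun _ _ ↦ Nat.zero_le _) (Set.mem_toFinset.mpr hP)

-- The fundamental identity and the factorization of `p𝓞 K` are available only for the unprimed
-- invariants; this transfers them to the primed ones.
lemma ramificationIdx'_eq_ramificationIdx_and_inertiaDeg'_eq_inertiaDeg {p : Ideal ℤ}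
    [p.IsMaximal] (hp : p ≠ ⊥) {P : Ideal (𝓞 K)} (hP : P ∈ p.primesOver (𝓞 K)) :
    p.ramificationIdx' P = P.ramificationIdx ℤ ∧ p.inertiaDeg' P = P.inertiaDeg ℤ := by
  have := hP.1
  have := hP.2
  have := Ideal.IsMaximal.of_liesOver_isMaximal P p
  exact ⟨Ideal.ramificationIdx'_eq_ramificationIdx p P hp, Ideal.inertiaDeg'_eq_inertiaDeg p P⟩

open IsDedekindDomain HeightOneSpectrum WithZero in
lemma exists_five_dvd_ramificationIdx' {θ : K} (hθ : 2 * θ ^ 6 + θ + 2 = 0) :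
    ∃ w : HeightOneSpectrum (𝓞 K), 0 < (Ideal.span {(2 : ℤ)}).ramificationIdx' w.asIdeal ∧
      5 ∣ (Ideal.span {(2 : ℤ)}).ramificationIdx' w.asIdeal := by
  have hθ_notMem : θ ∉ (algebraMap (𝓞 K) K).range := by
    rintro ⟨x, rfl⟩
    exact not_isIntegral_of_two_mul_pow_six_add_self_add_two_eq_zero hθ
      (RingOfIntegers.isIntegral_coe x)
  obtain ⟨w, hw⟩ := exists_one_lt_valuation_of_notMem_range K hθ_notMem
  have h2 : (2 : K) = algebraMap (𝓞 K) K (algebraMap ℤ (𝓞 K) 2) := by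
    rw [map_ofNat, map_ofNat]
  have hv2 : w.valuation K 2 =
      exp (-((Ideal.span {(2 : ℤ)}).ramificationIdx' w.asIdeal : ℤ)) := by
    rw [h2, valuation_of_algebraMap, intValuation_algebraMap_eq_exp_neg_ramificationIdx']
    simp
  have h2_lt : w.valuation K 2 < w.valuation K θ := by
    rw [h2]
    exact (w.valuation_le_one _).trans_lt hw
  have heq : w.valuation K 2 * w.valuation K θ ^ 6 = w.valuation K θ := by
    rw [← map_pow, ← map_mul, show 2 * θ ^ 6 = -(θ + 2) by linear_combination hθ,
      Valuation.map_neg, Valuation.map_add_eq_of_lt_left _ h2_lt]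
  obtain ⟨n, hn⟩ : ∃ n : ℤ, w.valuation K θ = exp n :=
    ⟨log _, (exp_log (ne_zero_of_lt hw)).symm⟩
  rw [hv2, hn, ← exp_nsmul, ← exp_add, exp_inj, nsmul_eq_mul] at heq
  rw [hn, ← exp_zero, exp_lt_exp] at hw
  exact ⟨w, by omega, by omega⟩

lemma exists_mem_primesOver_five_dvd_ramificationIdx {θ : K} (hθ : 2 * θ ^ 6 + θ + 2 = 0) :
    ∃ Q ∈ (Ideal.span {(2 : ℤ)}).primesOver (𝓞 K), 5 ∣ Q.ramificationIdx ℤ := by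
  obtain ⟨w, hpos, hdvd⟩ := exists_five_dvd_ramificationIdx' hθ
  have hle : (Ideal.span {(2 : ℤ)}).map (algebraMap ℤ (𝓞 K)) ≤ w.asIdeal := by
    by_contra h
    rw [Ideal.ramificationIdx'_of_not_le h] at hpos
    exact hpos.false
  have : w.asIdeal.LiesOver (Ideal.span {(2 : ℤ)}) :=
    (Ideal.liesOver_iff_dvd_map w.isPrime.ne_top).mpr (Ideal.dvd_iff_le.mpr hle)
  refine ⟨w.asIdeal, ⟨w.isPrime, this⟩, ?_⟩
  rwa [← Ideal.ramificationIdx'_eq_ramificationIdx (Ideal.span {2}) w.asIdeal (by simp)]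

lemma five_le_finrank {θ : K} (hθ : 2 * θ ^ 6 + θ + 2 = 0) : 5 ≤ Module.finrank ℚ K := by
  obtain ⟨Q, hQ, hdvd⟩ := exists_mem_primesOver_five_dvd_ramificationIdx hθ
  exact (Nat.le_of_dvd (Ideal.ramificationIdx_mul_inertiaDeg_pos hQ) (hdvd.mul_right _)).trans
    (ramificationIdx_mul_inertiaDeg_le_finrank hQ)

lemma exists_span_two_eq_mul_pow_five {θ : K} (hθ : 2 * θ ^ 6 + θ + 2 = 0)
    (h6 : Module.finrank ℚ K = 6) :
    ∃ 𝔭 𝔮 : Ideal (𝓞 K), 𝔭.IsPrime ∧ 𝔮.IsPrime ∧ 𝔭 ≠ 𝔮 ∧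
      Ideal.span {(2 : 𝓞 K)} = 𝔭 * 𝔮 ^ 5 ∧
      Ideal.inertiaDeg' (Ideal.span {(2 : ℤ)}) 𝔭 = 1 ∧
      Ideal.inertiaDeg' (Ideal.span {(2 : ℤ)}) 𝔮 = 1 ∧
      Ideal.ramificationIdx' (Ideal.span {(2 : ℤ)}) 𝔭 = 1 ∧
      Ideal.ramificationIdx' (Ideal.span {(2 : ℤ)}) 𝔮 = 5 := by
  set p := Ideal.span {(2 : ℤ)}
  obtain ⟨𝔮, h𝔮, hdvd⟩ := exists_mem_primesOver_five_dvd_ramificationIdx hθ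
  obtain ⟨he𝔮, hf𝔮⟩ : 𝔮.ramificationIdx ℤ = 5 ∧ 𝔮.inertiaDeg ℤ = 1 := by
    have hpos := Ideal.ramificationIdx_mul_inertiaDeg_pos h𝔮
    have hle := h6 ▸ ramificationIdx_mul_inertiaDeg_le_finrank h𝔮
    obtain ⟨k, hk⟩ := hdvd
    rw [hk, mul_assoc] at hpos hle
    obtain ⟨rfl, hf⟩ := mul_eq_one.mp (show k * 𝔮.inertiaDeg ℤ = 1 by omega)
    exact ⟨hk, hf⟩
  obtain ⟨𝔭, hne, h𝔭ef, hpair⟩ := Finset.exists_eq_pair_of_sum_eq_add_one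
    (g := fun P ↦ P.ramificationIdx ℤ * P.inertiaDeg ℤ)
    (fun P hP ↦ Ideal.ramificationIdx_mul_inertiaDeg_pos (Set.mem_toFinset.mp hP))
    (Set.mem_toFinset.mpr h𝔮) (by rw [sum_ramificationIdx_mul_inertiaDeg, h6, he𝔮, hf𝔮])
  have h𝔭 : 𝔭 ∈ p.primesOver (𝓞 K) := by rw [← Set.mem_toFinset, hpair]; simp
  obtain ⟨he𝔭, hf𝔭⟩ := mul_eq_one.mp h𝔭ef
  have hp : p ≠ ⊥ := by simp [p]
  have hspan : Ideal.span {(2 : 𝓞 K)} = 𝔭 * 𝔮 ^ 5 := by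
    rw [show Ideal.span {(2 : 𝓞 K)} = p.map (algebraMap ℤ (𝓞 K)) by
        rw [Ideal.map_span, Set.image_singleton, map_ofNat],
      Ideal.map_algebraMap_eq_finsetProd_pow hp, hpair, Finset.prod_pair hne, he𝔭, he𝔮, pow_one]
  obtain ⟨he𝔭', hf𝔭'⟩ := ramificationIdx'_eq_ramificationIdx_and_inertiaDeg'_eq_inertiaDeg hp h𝔭
  obtain ⟨he𝔮', hf𝔮'⟩ := ramificationIdx'_eq_ramificationIdx_and_inertiaDeg'_eq_inertiaDeg hp h𝔮
  exact ⟨𝔭, 𝔮, h𝔭.1, h𝔮.1, hne, hspan, hf𝔭' ▸ hf𝔭, hf𝔮' ▸ hf𝔮, he𝔭' ▸ he𝔭, he𝔮' ▸ he𝔮⟩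

end NumberField

lemma five_le_natDegree_of_irreducible_dvd {q : ℚ[X]} (hq : Irreducible q)
    (hdvd : q ∣ 2 * X ^ 6 + X + 2) : 5 ≤ q.natDegree := by
  have := Fact.mk hq
  have hroot : aeval (AdjoinRoot.root q) (2 * X ^ 6 + X + 2 : ℚ[X]) = 0 :=
    (AdjoinRoot.aeval_eq _).trans (AdjoinRoot.mk_eq_zero.mpr hdvd)
  have := NumberField.five_le_finrank (by simpa [map_ofNat] using hroot)
  rwa [(AdjoinRoot.powerBasis hq.ne_zero).finrank, AdjoinRoot.powerBasis_dim] at this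

lemma irreducible_two_mul_X_pow_six_add_X_add_two : Irreducible (2 * X ^ 6 + X + 2 : ℚ[X]) := by
  have hdeg := natDegree_two_mul_X_pow_six_add_X_add_two
  have hne : (2 * X ^ 6 + X + 2 : ℚ[X]) ≠ 0 := ne_zero_of_natDegree_gt (n := 0) (by omega)
  refine (irreducible_iff_degree_lt _ hne fun hu ↦ ?_).mpr fun q hq hdvd ↦ ?_
  · simpa [hdeg] using natDegree_eq_zero_of_isUnit hu
  by_contra hu
  have hq0 : q ≠ 0 := ne_zero_of_dvd_ne_zero hne hdvd
  obtain ⟨r, hr, hrq⟩ := WfDvdMonoid.exists_irreducible_factor hu hq0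
  have h5 := five_le_natDegree_of_irreducible_dvd hr (hrq.trans hdvd)
  have h3 : q.natDegree ≤ 3 := natDegree_le_of_degree_le (by simpa [hdeg] using hq)
  have := natDegree_le_of_dvd hrq hq0
  omega

lemma finrank_eq_six {K : Type*} [Field K] [NumberField K] {θ : K}
    (hθ : aeval θ (2 * X ^ 6 + X + 2 : ℚ[X]) = 0) (hadj : IntermediateField.adjoin ℚ {θ} = ⊤) :
    Module.finrank ℚ K = 6 := by
  have hirr := irreducible_two_mul_X_pow_six_add_X_add_two
  rw [← IntermediateField.finrank_top', ← hadj,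
    IntermediateField.adjoin.finrank (Algebra.IsIntegral.isIntegral θ),
    ← minpoly.eq_of_irreducible hirr hθ, natDegree_mul_leadingCoeff_inv _ hirr.ne_zero,
    natDegree_two_mul_X_pow_six_add_X_add_two]

/-- f(x) = 2x⁶ + x + 2 is irreducible over ℚ, and in the ring of integers
of A = ℚ[x]/(f) (presented as a number field K = ℚ(θ) with f(θ) = 0), the ideal (2)
factors as 𝔭·𝔮⁵ with 𝔭, 𝔮 of residue degree 1 and ramification indices 1 and 5. -/
theorem stmt_15 :
    Irreducible (2 * X ^ 6 + X + 2 : ℚ[X]) ∧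
    ∀ (K : Type) [Field K] [NumberField K] (θ : K),
      aeval θ (2 * X ^ 6 + X + 2 : ℚ[X]) = 0 →
      IntermediateField.adjoin ℚ {θ} = ⊤ →
      ∃ 𝔭 𝔮 : Ideal (𝓞 K), 𝔭.IsPrime ∧ 𝔮.IsPrime ∧ 𝔭 ≠ 𝔮 ∧
        Ideal.span {(2 : 𝓞 K)} = 𝔭 * 𝔮 ^ 5 ∧
        Ideal.inertiaDeg' (Ideal.span {(2 : ℤ)}) 𝔭 = 1 ∧
        Ideal.inertiaDeg' (Ideal.span {(2 : ℤ)}) 𝔮 = 1 ∧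
        Ideal.ramificationIdx' (Ideal.span {(2 : ℤ)}) 𝔭 = 1 ∧
        Ideal.ramificationIdx' (Ideal.span {(2 : ℤ)}) 𝔮 = 5 := by
  refine ⟨irreducible_two_mul_X_pow_six_add_X_add_two, fun K _ _ θ hθ hadj ↦ ?_⟩
  exact NumberField.exists_span_two_eq_mul_pow_five (by simpa [map_ofNat] using hθ)
    (finrank_eq_six hθ hadj)
end

section
/- Let f(x) = 2x⁶ + x + 2, A = ℚ[x]/(f) with ring of integers O whose class group is ℤ/2ℤ generated by the class of a prime above 2, with both primes 𝔭, 𝔮 above 2 non-principal and 2O = 𝔭𝔮⁵. Then there is no u ∈ A* which is a {2}-unit (i.e., supported only on primes above 2 and units) with N_{A/ℚ}(u) ∈ 2·(ℚ*)². -/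
open Polynomial NumberField
open scoped nonZeroDivisors

/-!
Both primes above 2 lie in the non-trivial class of a class group of order 2, so a principal
ideal 𝔭^a 𝔮^b forces a + b to be even. Its norm is 2^(a+b), an even power of 2, which cannot be
of the form 2c² because 2 is not a rational square.
-/

theorem Group.eq_of_ne_one_of_card_eq_two {G : Type*} [Group G] (hG : Nat.card G = 2)
    {x y : G} (hx : x ≠ 1) (hy : y ≠ 1) : x = y :=
  ((Nat.card_eq_two_iff' 1).mp hG).unique hx hy

theorem Group.orderOf_eq_two_of_card_eq_two {G : Type*} [Group G] (hG : Nat.card G = 2)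
    {x : G} (hx : x ≠ 1) : orderOf x = 2 := by
  have : Finite G := Nat.finite_of_card_ne_zero (by omega)
  have hdvd := orderOf_dvd_natCard x
  rw [hG] at hdvd
  rcases (Nat.dvd_prime Nat.prime_two).mp hdvd with h | h
  · exact absurd (orderOf_eq_one_iff.mp h) hx
  · exact h

theorem Group.even_add_of_zpow_mul_zpow_eq_one {G : Type*} [Group G] (hG : Nat.card G = 2)
    {x y : G} (hx : x ≠ 1) (hy : y ≠ 1) {a b : ℤ} (h : x ^ a * y ^ b = 1) : Even (a + b) := by
  rw [← Group.eq_of_ne_one_of_card_eq_two hG hx hy, ← zpow_add,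
    ← orderOf_dvd_iff_zpow_eq_one, Group.orderOf_eq_two_of_card_eq_two hG hx] at h
  exact even_iff_two_dvd.mpr (mod_cast h)

theorem Ideal.mem_nonZeroDivisors_of_not_isPrincipal {R : Type*} [CommRing R] [IsDomain R]
    {I : Ideal R} (hI : ¬ I.IsPrincipal) : I ∈ (Ideal R)⁰ :=
  mem_nonZeroDivisors_of_ne_zero fun h ↦ hI (h ▸ bot_isPrincipal)

theorem ClassGroup.mk0_zpow_mul_mk0_zpow_eq_one {R K : Type*} [CommRing R] [IsDedekindDomain R]
    [Field K] [Algebra R K] [IsFractionRing R K] {I J : (Ideal R)⁰} {u : K} (hu : u ≠ 0)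
    {a b : ℤ} (h : FractionalIdeal.spanSingleton R⁰ u =
      ((I : Ideal R) : FractionalIdeal R⁰ K) ^ a * ((J : Ideal R) : FractionalIdeal R⁰ K) ^ b) :
    ClassGroup.mk0 I ^ a * ClassGroup.mk0 J ^ b = 1 := by
  have hunits : Units.mk0 _ (FractionalIdeal.spanSingleton_ne_zero_iff.mpr hu) =
      FractionalIdeal.mk0 K I ^ a * FractionalIdeal.mk0 K J ^ b := by
    apply Units.ext
    rw [Units.val_mul, Units.val_zpow_eq_zpow_val, Units.val_zpow_eq_zpow_val]
    exact h
  have hclass := congrArg (ClassGroup.mk K) hunits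
  rw [map_mul, map_zpow, map_zpow, ClassGroup.mk_mk0, ClassGroup.mk_mk0] at hclass
  rw [← hclass, ClassGroup.mk_eq_one_iff]
  exact ⟨u, by simp [FractionalIdeal.coe_spanSingleton]⟩

theorem NumberField.abs_norm_eq_of_spanSingleton_eq_zpow_mul_zpow {K : Type*} [Field K]
    [NumberField K] {I J : Ideal (𝓞 K)} {u : K} {a b : ℤ}
    (h : FractionalIdeal.spanSingleton (𝓞 K)⁰ u =
      (I : FractionalIdeal (𝓞 K)⁰ K) ^ a * (J : FractionalIdeal (𝓞 K)⁰ K) ^ b) :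
    |Algebra.norm ℚ u| = (Ideal.absNorm I : ℚ) ^ a * (Ideal.absNorm J : ℚ) ^ b := by
  rw [← FractionalIdeal.absNorm_span_singleton (𝓞 K), h, map_mul, map_zpow₀, map_zpow₀,
    FractionalIdeal.coeIdeal_absNorm, FractionalIdeal.coeIdeal_absNorm]

theorem two_mul_sq_ne_two_zpow {c : ℚ} (hc : c ≠ 0) {n : ℤ} (hn : Even n) :
    2 * c ^ 2 ≠ 2 ^ n := by
  obtain ⟨m, rfl⟩ := hn
  intro h
  refine (by norm_num : ¬ IsSquare (2 : ℚ)) ⟨2 ^ m / c, ?_⟩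
  rw [div_mul_div_comm, ← zpow_add₀ two_ne_zero, ← h]
  field_simp

theorem stmt_16_general (K : Type*) [Field K] [NumberField K]
    (𝔭 𝔮 : Ideal (𝓞 K))
    (hN𝔭 : Ideal.absNorm 𝔭 = 2) (hN𝔮 : Ideal.absNorm 𝔮 = 2)
    (hclass : Nat.card (ClassGroup (𝓞 K)) = 2)
    (hp_np : ¬ 𝔭.IsPrincipal) (hq_np : ¬ 𝔮.IsPrincipal) :
    ¬ ∃ u : K, u ≠ 0 ∧
      (∃ a b : ℤ, FractionalIdeal.spanSingleton (𝓞 K)⁰ u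
          = (𝔭 : FractionalIdeal (𝓞 K)⁰ K) ^ a * (𝔮 : FractionalIdeal (𝓞 K)⁰ K) ^ b) ∧
      ∃ c : ℚ, c ≠ 0 ∧ Algebra.norm ℚ u = 2 * c ^ 2 := by
  rintro ⟨u, hu, ⟨a, b, hab⟩, c, hc, hnorm⟩
  have hp0 := Ideal.mem_nonZeroDivisors_of_not_isPrincipal hp_np
  have hq0 := Ideal.mem_nonZeroDivisors_of_not_isPrincipal hq_np
  have heven : Even (a + b) :=
    Group.even_add_of_zpow_mul_zpow_eq_one hclass
      (mt (ClassGroup.mk0_eq_one_iff hp0).mp hp_np) (mt (ClassGroup.mk0_eq_one_iff hq0).mp hq_np)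
      (ClassGroup.mk0_zpow_mul_mk0_zpow_eq_one (I := ⟨𝔭, hp0⟩) (J := ⟨𝔮, hq0⟩) hu hab)
  have habs := NumberField.abs_norm_eq_of_spanSingleton_eq_zpow_mul_zpow hab
  rw [hN𝔭, hN𝔮, hnorm, abs_of_pos (by positivity), Nat.cast_ofNat,
    ← zpow_add₀ two_ne_zero] at habs
  exact two_mul_sq_ne_two_zpow hc heven habs

/-- for A = ℚ[x]/(2x⁶+x+2) (presented as the number field K = ℚ(θ)),
with class group of order 2, 2·O = 𝔭𝔮⁵ with 𝔭, 𝔮 non-principal primes of norm 2,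
there is no {2}-unit u ∈ A* (fractional ideal supported on 𝔭, 𝔮) whose norm lies in
2·(ℚ*)². -/
theorem stmt_16 (K : Type*) [Field K] [NumberField K] (θ : K)
    (hθ : aeval θ (2 * X ^ 6 + X + 2 : ℚ[X]) = 0)
    (hgen : IntermediateField.adjoin ℚ {θ} = ⊤)
    (𝔭 𝔮 : Ideal (𝓞 K)) (h𝔭 : 𝔭.IsPrime) (h𝔮 : 𝔮.IsPrime) (hne : 𝔭 ≠ 𝔮)
    (hN𝔭 : Ideal.absNorm 𝔭 = 2) (hN𝔮 : Ideal.absNorm 𝔮 = 2)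
    (hfact : Ideal.span {(2 : 𝓞 K)} = 𝔭 * 𝔮 ^ 5)
    (hclass : Nat.card (ClassGroup (𝓞 K)) = 2)
    (hp_np : ¬ 𝔭.IsPrincipal) (hq_np : ¬ 𝔮.IsPrincipal) :
    ¬ ∃ u : K, u ≠ 0 ∧
      (∃ a b : ℤ, FractionalIdeal.spanSingleton (𝓞 K)⁰ u
          = (𝔭 : FractionalIdeal (𝓞 K)⁰ K) ^ a * (𝔮 : FractionalIdeal (𝓞 K)⁰ K) ^ b) ∧
      ∃ c : ℚ, c ≠ 0 ∧ Algebra.norm ℚ u = 2 * c ^ 2 :=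
  stmt_16_general K 𝔭 𝔮 hN𝔭 hN𝔮 hclass hp_np hq_np
end

section
/- Let k be a field of characteristic 0, f ∈ k[x] square-free of even degree n, A = k[x]/(f), and δ ∈ A* with f_n·N_{A/k}(δ) = v² for some v ∈ k*. With Q_{δ,i} as above and ℓ(u) = u₀ + u₁θ + ⋯ + u_{n−1}θ^{n−1}, on the locus Q_{δ,2}(u) = ⋯ = Q_{δ,n−1}(u) = 0 with Q_{δ,1}(u) ≠ 0, the values x(u) = −Q_{δ,0}(u)/Q_{δ,1}(u) and y(u) = v·N_{A[u]/k[u]}(ℓ(u))/Q_{δ,1}(u)^{n/2} satisfy y(u)² = f(x(u)). -/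
open Polynomial

/-!
Write `θ` for the root of `f`. On the locus, `δ ℓ² = q₀ + q₁ θ = -q₁ (x - θ)` with `x = -q₀ / q₁`.
Multiplication by `θ` has characteristic polynomial `f / f_n`, so `N(x - θ) = f(x) / f_n`, and
taking norms gives `N(δ) N(ℓ)² = q₁ⁿ f(x) / f_n` (`n` is even); multiplying by `f_n` and using
`f_n N(δ) = v²` yields the claim.
-/

theorem PowerBasis.norm_algebraMap_sub_gen {R S : Type*} [CommRing R] [CommRing S] [Algebra R S]
    (pb : PowerBasis R S) (t : R) :
    Algebra.norm R (algebraMap R S t - pb.gen) = (minpoly R pb.gen).eval t := by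
  rw [Algebra.norm_eq_matrix_det pb.basis, ← charpoly_leftMulMatrix pb, Matrix.eval_charpoly,
    map_sub, AlgHom.commutes, Matrix.algebraMap_eq_diagonal]
  rfl

namespace AdjoinRoot

variable {K : Type*} [Field K] {f : K[X]}

theorem norm_algebraMap_sub_root (hf : f ≠ 0) (t : K) :
    Algebra.norm K (algebraMap K (AdjoinRoot f) t - root f) = f.eval t / f.leadingCoeff := by
  rw [← powerBasis_gen hf, PowerBasis.norm_algebraMap_sub_gen, powerBasis_gen, minpoly_root hf,
    eval_mul, eval_C, div_eq_mul_inv]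

theorem norm_algebraMap_add_algebraMap_mul_root (hf : f ≠ 0) (a : K) {b : K} (hb : b ≠ 0) :
    Algebra.norm K (algebraMap K (AdjoinRoot f) a + algebraMap K (AdjoinRoot f) b * root f)
      = (-b) ^ f.natDegree * f.eval (-a / b) / f.leadingCoeff := by
  have hlin : algebraMap K (AdjoinRoot f) a + algebraMap K (AdjoinRoot f) b * root f
      = algebraMap K _ (-b) * (algebraMap K _ (-a / b) - root f) := by
    rw [mul_sub, ← map_mul, map_neg]
    field_simp
    ring
  have hrank : Module.finrank K (AdjoinRoot f) = f.natDegree := by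
    rw [(powerBasis hf).finrank, powerBasis_dim]
  rw [hlin, map_mul, Algebra.norm_algebraMap, hrank, norm_algebraMap_sub_root hf, mul_div_assoc]

end AdjoinRoot

theorem Fin.sum_eq_of_eq_zero_of_two_le {M : Type*} [AddCommMonoid M] {n : ℕ} (hn : 2 ≤ n)
    (g : Fin n → M) (hg : ∀ i : Fin n, 2 ≤ (i : ℕ) → g i = 0) :
    ∑ i, g i = g ⟨0, by omega⟩ + g ⟨1, by omega⟩ := by
  obtain ⟨m, rfl⟩ : ∃ m, n = m + 2 := ⟨n - 2, by omega⟩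
  rw [Fin.sum_univ_succ, Fin.sum_univ_succ, Finset.sum_eq_zero fun i _ => hg _ (by simp), add_zero]
  rfl

/-- with δ ∈ A* such that f_n·N_{A/k}(δ) = v², on the locus
Q_{δ,2}(u) = ⋯ = Q_{δ,n−1}(u) = 0 with Q_{δ,1}(u) ≠ 0, the values
x(u) = −Q_{δ,0}(u)/Q_{δ,1}(u) and y(u) = v·N(ℓ(u))/Q_{δ,1}(u)^{n/2}
satisfy y(u)² = f(x(u)). -/
theorem stmt_18 (k : Type*) [Field k]
    (f : k[X]) (n : ℕ) (hn : f.natDegree = n)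
    (hne : Even n) (hn2 : 2 ≤ n)
    (δ : (AdjoinRoot f)ˣ) (v : k)
    (hnorm : f.leadingCoeff * Algebra.norm k ((δ : AdjoinRoot f)) = v ^ 2)
    (u q : Fin n → k)
    (hq : (δ : AdjoinRoot f)
          * (∑ i : Fin n, algebraMap k (AdjoinRoot f) (u i) * AdjoinRoot.root f ^ (i : ℕ)) ^ 2
        = ∑ i : Fin n, algebraMap k (AdjoinRoot f) (q i) * AdjoinRoot.root f ^ (i : ℕ))
    (hvanish : ∀ i : Fin n, 2 ≤ (i : ℕ) → q i = 0)
    (hq1 : q ⟨1, by omega⟩ ≠ 0) :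
    (v * Algebra.norm k
          (∑ i : Fin n, algebraMap k (AdjoinRoot f) (u i) * AdjoinRoot.root f ^ (i : ℕ))
        / q ⟨1, by omega⟩ ^ (n / 2)) ^ 2
      = f.eval (-(q ⟨0, by omega⟩) / q ⟨1, by omega⟩) := by
  have hf : f ≠ 0 := by rintro rfl; simp at hn; omega
  set ℓ := ∑ i : Fin n, algebraMap k (AdjoinRoot f) (u i) * AdjoinRoot.root f ^ (i : ℕ)
  set q₀ := q ⟨0, by omega⟩
  set q₁ := q ⟨1, by omega⟩
  have hlin : ∑ i : Fin n, algebraMap k (AdjoinRoot f) (q i) * AdjoinRoot.root f ^ (i : ℕ)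
      = algebraMap k _ q₀ + algebraMap k _ q₁ * AdjoinRoot.root f := by
    rw [Fin.sum_eq_of_eq_zero_of_two_le hn2 _ fun i hi => by simp [hvanish i hi]]
    simp [q₀, q₁]
  have hnorms : Algebra.norm k (δ : AdjoinRoot f) * Algebra.norm k ℓ ^ 2
      = q₁ ^ n * f.eval (-q₀ / q₁) / f.leadingCoeff := by
    rw [← map_pow, ← map_mul, hq, hlin, AdjoinRoot.norm_algebraMap_add_algebraMap_mul_root hf _ hq1,
      hn, hne.neg_pow]
  have hq₁n : (q₁ ^ (n / 2)) ^ 2 = q₁ ^ n := by rw [← pow_mul, Nat.div_mul_cancel hne.two_dvd]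
  have hlc : f.leadingCoeff ≠ 0 := leadingCoeff_ne_zero.mpr hf
  calc (v * Algebra.norm k ℓ / q₁ ^ (n / 2)) ^ 2
      = f.leadingCoeff * (Algebra.norm k (δ : AdjoinRoot f) * Algebra.norm k ℓ ^ 2) / q₁ ^ n := by
        rw [div_pow, hq₁n, mul_pow, ← hnorm]; ring
    _ = f.eval (-q₀ / q₁) := by rw [hnorms]; field_simp
end
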